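/- For spherical interpolation h(t) between z₀ and z₁ with angle θ satisfying 0 < θ ≤ π/2, one has min{‖z₀‖, ‖z₁‖} ≤ ‖h(t)‖ ≤ max{‖z₀‖, ‖z₁‖} for all t ∈ [0,1]. -/

import Mathlib

/-! With `a = sin((1-t)θ)/sin θ`, `b = sin(tθ)/sin θ` and `c = cos θ`, the identity
`sin² u + sin² v + 2 sin u sin v cos(u+v) = sin²(u+v)` gives `a² + b² + 2abc = 1`.
Hence `‖a z₀ + b z₁‖² = a²‖z₀‖² + b²‖z₁‖² + 2abc ‖z₀‖‖z₁‖` is a convex combination of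
`‖z₀‖²`, `‖z₁‖²` and `‖z₀‖‖z₁‖`, the weights being nonnegative because `0 < θ ≤ π/2`.
Each of the three values lies between the squares of the smaller and the larger norm. -/

open Real

theorem sin_sq_add_sin_sq_add_two_mul_sin_mul_sin_mul_cos_add (u v : ℝ) :
    sin u ^ 2 + sin v ^ 2 + 2 * sin u * sin v * cos (u + v) = sin (u + v) ^ 2 := by
  rw [sin_add, cos_add]
  linear_combination (-sin u ^ 2) * sin_sq_add_cos_sq v + (-sin v ^ 2) * sin_sq_add_cos_sq u

theorem norm_smul_add_smul_sq {E : Type*} [SeminormedAddCommGroup E] [InnerProductSpace ℝ E]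
    {x y : E} {c : ℝ} (hxy : inner ℝ x y = c * (‖x‖ * ‖y‖)) {a b : ℝ} (ha : 0 ≤ a) (hb : 0 ≤ b) :
    ‖a • x + b • y‖ ^ 2 = a ^ 2 * ‖x‖ ^ 2 + b ^ 2 * ‖y‖ ^ 2 + 2 * a * b * c * (‖x‖ * ‖y‖) := by
  rw [norm_add_sq_real, real_inner_smul_left, real_inner_smul_right, hxy, norm_smul, norm_smul,
    Real.norm_of_nonneg ha, Real.norm_of_nonneg hb]
  ring

theorem norm_smul_add_smul_mem_Icc {E : Type*} [SeminormedAddCommGroup E]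
    [InnerProductSpace ℝ E] {x y : E} {c : ℝ} (hc : 0 ≤ c)
    (hxy : inner ℝ x y = c * (‖x‖ * ‖y‖)) {a b : ℝ} (ha : 0 ≤ a) (hb : 0 ≤ b)
    (habc : a ^ 2 + b ^ 2 + 2 * a * b * c = 1) :
    min ‖x‖ ‖y‖ ≤ ‖a • x + b • y‖ ∧ ‖a • x + b • y‖ ≤ max ‖x‖ ‖y‖ := by
  set m := min ‖x‖ ‖y‖
  set M := max ‖x‖ ‖y‖
  have hm : 0 ≤ m := le_min (norm_nonneg x) (norm_nonneg y)
  have hmx : m ≤ ‖x‖ := min_le_left _ _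
  have hmy : m ≤ ‖y‖ := min_le_right _ _
  have hxM : ‖x‖ ≤ M := le_max_left _ _
  have hyM : ‖y‖ ≤ M := le_max_right _ _
  have hw : 0 ≤ 2 * a * b * c := by positivity
  have hsq := norm_smul_add_smul_sq hxy ha hb
  constructor
  · rw [← sq_le_sq₀ hm (norm_nonneg _), hsq]
    have hmxy : m ^ 2 ≤ ‖x‖ * ‖y‖ := by rw [sq]; exact mul_le_mul hmx hmy hm (norm_nonneg x)
    nlinarith [pow_le_pow_left₀ hm hmx 2, pow_le_pow_left₀ hm hmy 2, sq_nonneg a, sq_nonneg b]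
  · rw [← sq_le_sq₀ (norm_nonneg _) (hm.trans (hmx.trans hxM)), hsq]
    have hxyM : ‖x‖ * ‖y‖ ≤ M ^ 2 := by
      rw [sq]; exact mul_le_mul hxM hyM (norm_nonneg y) (hm.trans (hmx.trans hxM))
    nlinarith [pow_le_pow_left₀ (norm_nonneg x) hxM 2, pow_le_pow_left₀ (norm_nonneg y) hyM 2,
      sq_nonneg a, sq_nonneg b]

/-- For spherical interpolation `h(t)` between `z₀` and `z₁` with angle `θ` satisfying
`0 < θ ≤ π/2`, one has `min{‖z₀‖,‖z₁‖} ≤ ‖h(t)‖ ≤ max{‖z₀‖,‖z₁‖}` for all `t ∈ [0,1]`. -/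
theorem slerp_norm_between (d : ℕ) (z₀ z₁ : EuclideanSpace ℝ (Fin d)) (θ : ℝ)
    (hz₀ : z₀ ≠ 0) (hz₁ : z₁ ≠ 0)
    (hθ : 0 < θ) (hθπ : θ ≤ π / 2)
    (hcos : Real.cos θ = (inner ℝ z₀ z₁ : ℝ) / (‖z₀‖ * ‖z₁‖)) :
    ∀ t ∈ Set.Icc (0 : ℝ) 1,
      min ‖z₀‖ ‖z₁‖
          ≤ ‖(Real.sin ((1 - t) * θ) / Real.sin θ) • z₀
              + (Real.sin (t * θ) / Real.sin θ) • z₁‖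
        ∧ ‖(Real.sin ((1 - t) * θ) / Real.sin θ) • z₀
              + (Real.sin (t * θ) / Real.sin θ) • z₁‖
          ≤ max ‖z₀‖ ‖z₁‖ := by
  rintro t ⟨ht₀, ht₁⟩
  have hsin : 0 < sin θ := sin_pos_of_pos_of_lt_pi hθ (by linarith [pi_pos])
  have hcoeff : ∀ s, 0 ≤ s → s ≤ 1 → 0 ≤ sin (s * θ) / sin θ := fun s hs₀ hs₁ =>
    div_nonneg (sin_nonneg_of_nonneg_of_le_pi (by positivity) (by nlinarith [pi_pos]))
      hsin.le
  have hinner : inner ℝ z₀ z₁ = cos θ * (‖z₀‖ * ‖z₁‖) := by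
    rw [hcos, div_mul_cancel₀]
    exact mul_ne_zero (norm_ne_zero_iff.2 hz₀) (norm_ne_zero_iff.2 hz₁)
  refine norm_smul_add_smul_mem_Icc (cos_nonneg_of_mem_Icc ⟨by linarith, hθπ⟩) hinner
    (hcoeff _ (by linarith) (by linarith)) (hcoeff t ht₀ ht₁) ?_
  have hid := sin_sq_add_sin_sq_add_two_mul_sin_mul_sin_mul_cos_add ((1 - t) * θ) (t * θ)
  rw [show (1 - t) * θ + t * θ = θ by ring] at hid
  field_simp
  linear_combination hid
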